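/- arXiv:2112.09315 — 6 statements merged into one kernel-verified Lean document; each statement's English description precedes it below -/
import Mathlib

section
/- The Bellman operator T is an α-contraction in the sup norm: for all J, J' : S → ℝ, ‖T J − T J'‖ ≤ α · ‖J − J'‖. -/
/-- The Bellman operator `T` of the finite discounted MDP. -/
noncomputable def Tbell {S A : Type*} [Fintype S] [Fintype A] [Nonempty A]
    (P : S → A → S → ℝ) (g : S → A → ℝ) (α : ℝ) (J : S → ℝ) : S → ℝ :=
  fun x => Finset.univ.inf' Finset.univ_nonempty
    (fun a : A => g x a + α * ∑ y, P x a y * J y)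

lemma inf'_sub_inf'_le {A : Type*} (s : Finset A) (hs : s.Nonempty) (f g : A → ℝ)
    (C : ℝ) (h : ∀ a ∈ s, f a - g a ≤ C) :
    s.inf' hs f - s.inf' hs g ≤ C := by
  obtain ⟨a, ha, hag⟩ := s.exists_mem_eq_inf' hs g
  have h1 : s.inf' hs f ≤ f a := Finset.inf'_le _ ha
  linarith [h a ha, hag, h1]

theorem stmt_1 {S A : Type*} [Fintype S] [Nonempty S] [DecidableEq S] [Fintype A] [Nonempty A]
    (P : S → A → S → ℝ) (g : S → A → ℝ) (α : ℝ)
    (hP0 : ∀ x a y, 0 ≤ P x a y) (hP1 : ∀ x a, ∑ y, P x a y = 1)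
    (hα0 : 0 < α) (hα1 : α < 1)
    (J J' : S → ℝ) :
    ‖Tbell P g α J - Tbell P g α J'‖ ≤ α * ‖J - J'‖ := by
  have hC : (0:ℝ) ≤ α * ‖J - J'‖ := mul_nonneg hα0.le (norm_nonneg _)
  rw [pi_norm_le_iff_of_nonneg hC]
  intro x
  rw [Pi.sub_apply, Real.norm_eq_abs, abs_sub_le_iff]
  have key : ∀ (K K' : S → ℝ) (a : A),
      (g x a + α * ∑ y, P x a y * K y) - (g x a + α * ∑ y, P x a y * K' y)
        ≤ α * ‖K - K'‖ := by
    intro K K' a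
    have hsum : ∑ y, P x a y * (K y - K' y)
        = (∑ y, P x a y * K y) - ∑ y, P x a y * K' y := by
      simp [mul_sub, Finset.sum_sub_distrib]
    rw [show (g x a + α * ∑ y, P x a y * K y) - (g x a + α * ∑ y, P x a y * K' y)
        = α * ∑ y, P x a y * (K y - K' y) by rw [hsum]; ring]
    have hb : ∑ y, P x a y * (K y - K' y) ≤ ∑ y, P x a y * ‖K - K'‖ := by
      apply Finset.sum_le_sum
      intro y _
      apply mul_le_mul_of_nonneg_left _ (hP0 x a y)
      calc K y - K' y ≤ |K y - K' y| := le_abs_self _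
        _ = ‖(K - K') y‖ := by simp [Real.norm_eq_abs]
        _ ≤ ‖K - K'‖ := norm_le_pi_norm _ y
    have : ∑ y, P x a y * ‖K - K'‖ = ‖K - K'‖ := by
      rw [← Finset.sum_mul, hP1, one_mul]
    nlinarith [hb, this]
  have hnorm : ‖J - J'‖ = ‖J' - J‖ := by rw [← norm_neg]; congr 1; abel
  constructor
  · exact inf'_sub_inf'_le _ _ _ _ _ (fun a _ => key J J' a)
  · have := inf'_sub_inf'_le Finset.univ Finset.univ_nonempty
      (fun a : A => g x a + α * ∑ y, P x a y * J' y)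
      (fun a : A => g x a + α * ∑ y, P x a y * J y)
      (α * ‖J - J'‖) (fun a _ => hnorm ▸ key J' J a)
    simpa [Tbell] using this
end

section
/- (Bellman's optimality equation, Proposition 1.2.2 of Bertsekas.) There exists a function J* : S → ℝ satisfying J* = T J*, and J* is unique: any J : S → ℝ satisfying J = T J equals J*. -/
lemma inf'_sub_inf'_le_s5 {A : Type*} [Fintype A] [Nonempty A] (f h : A → ℝ) (c : ℝ)
    (hc : ∀ a, f a ≤ h a + c) :
    Finset.univ.inf' Finset.univ_nonempty f ≤ Finset.univ.inf' Finset.univ_nonempty h + c := by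
  obtain ⟨a, -, ha⟩ := Finset.exists_mem_eq_inf' (Finset.univ_nonempty (α := A)) h
  calc Finset.univ.inf' Finset.univ_nonempty f ≤ f a :=
        Finset.inf'_le _ (Finset.mem_univ a)
    _ ≤ h a + c := hc a
    _ = _ := by rw [ha]

theorem stmt_5 {S A : Type*} [Fintype S] [Nonempty S] [DecidableEq S] [Fintype A] [Nonempty A]
    (P : S → A → S → ℝ) (g : S → A → ℝ) (α : ℝ)
    (hP0 : ∀ x a y, 0 ≤ P x a y) (hP1 : ∀ x a, ∑ y, P x a y = 1)
    (hα0 : 0 < α) (hα1 : α < 1) :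
    ∃! Jstar : S → ℝ, Tbell P g α Jstar = Jstar := by
  have key : ∀ J1 J2 : S → ℝ, ∀ x a,
      g x a + α * ∑ y, P x a y * J1 y ≤ (g x a + α * ∑ y, P x a y * J2 y) + α * dist J1 J2 := by
    intro J1 J2 x a
    have h1 : ∑ y, P x a y * J1 y - ∑ y, P x a y * J2 y ≤ dist J1 J2 := by
      rw [← Finset.sum_sub_distrib]
      calc ∑ y, (P x a y * J1 y - P x a y * J2 y)
          = ∑ y, P x a y * (J1 y - J2 y) := by
            exact Finset.sum_congr rfl fun y _ => by ring
        _ ≤ ∑ y, P x a y * dist J1 J2 := by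
            apply Finset.sum_le_sum
            intro y _
            refine mul_le_mul_of_nonneg_left ?_ (hP0 x a y)
            calc J1 y - J2 y ≤ |J1 y - J2 y| := le_abs_self _
              _ = dist (J1 y) (J2 y) := (Real.dist_eq _ _).symm
              _ ≤ dist J1 J2 := dist_le_pi_dist J1 J2 y
        _ = dist J1 J2 := by rw [← Finset.sum_mul, hP1, one_mul]
    nlinarith
  have hlip : ∀ J1 J2 : S → ℝ, dist (Tbell P g α J1) (Tbell P g α J2) ≤ α * dist J1 J2 := by
    intro J1 J2
    rw [dist_pi_le_iff (by positivity)]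
    intro x
    rw [Real.dist_eq, abs_sub_le_iff]
    have h1 := inf'_sub_inf'_le_s5 (fun a => g x a + α * ∑ y, P x a y * J1 y)
        (fun a => g x a + α * ∑ y, P x a y * J2 y) (α * dist J1 J2) (key J1 J2 x)
    have h2 := inf'_sub_inf'_le_s5 (fun a => g x a + α * ∑ y, P x a y * J2 y)
        (fun a => g x a + α * ∑ y, P x a y * J1 y) (α * dist J1 J2)
        (by simpa [dist_comm J2 J1] using key J2 J1 x)
    simp only [Tbell]
    constructor <;> linarith
  have hcontr : ContractingWith ⟨α, hα0.le⟩ (Tbell P g α) := by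
    constructor
    · exact_mod_cast hα1
    · exact LipschitzWith.of_dist_le_mul hlip
  refine ⟨hcontr.fixedPoint (Tbell P g α), hcontr.fixedPoint_isFixedPt, ?_⟩
  intro J hJ
  exact hcontr.fixedPoint_unique hJ
end

section
/- (Value iteration convergence.) For every J : S → ℝ and every n ∈ ℕ, ‖T^n J − J*‖ ≤ α^n · ‖J − J*‖; consequently the iterates T^n J converge to J* as n → ∞. -/
lemma Tbell_contraction {S A : Type*} [Fintype S] [Nonempty S] [Fintype A] [Nonempty A]
    (P : S → A → S → ℝ) (g : S → A → ℝ) (α : ℝ)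
    (hP0 : ∀ x a y, 0 ≤ P x a y) (hP1 : ∀ x a, ∑ y, P x a y = 1)
    (hα0 : 0 < α) (J K : S → ℝ) :
    ‖Tbell P g α J - Tbell P g α K‖ ≤ α * ‖J - K‖ := by
  have hC : 0 ≤ α * ‖J - K‖ := mul_nonneg hα0.le (norm_nonneg _)
  rw [pi_norm_le_iff_of_nonneg hC]
  intro x
  have key : ∀ a : A, |(g x a + α * ∑ y, P x a y * J y) -
      (g x a + α * ∑ y, P x a y * K y)| ≤ α * ‖J - K‖ := by
    intro a
    have : (g x a + α * ∑ y, P x a y * J y) - (g x a + α * ∑ y, P x a y * K y)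
        = α * ∑ y, P x a y * (J y - K y) := by
      simp only [Finset.mul_sum]
      rw [add_sub_add_left_eq_sub, ← Finset.sum_sub_distrib]
      congr 1; ext y; ring
    rw [this, abs_mul, abs_of_pos hα0]
    refine mul_le_mul_of_nonneg_left ?_ hα0.le
    calc |∑ y, P x a y * (J y - K y)| ≤ ∑ y, |P x a y * (J y - K y)| :=
          Finset.abs_sum_le_sum_abs _ _
      _ ≤ ∑ y, P x a y * ‖J - K‖ := by
          refine Finset.sum_le_sum fun y _ => ?_
          rw [abs_mul, abs_of_nonneg (hP0 x a y)]
          refine mul_le_mul_of_nonneg_left ?_ (hP0 x a y)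
          have := norm_le_pi_norm (J - K) y
          simpa using this
      _ = ‖J - K‖ := by rw [← Finset.sum_mul, hP1, one_mul]
  have h1 : Tbell P g α J x ≤ Tbell P g α K x + α * ‖J - K‖ := by
    obtain ⟨a, _, ha⟩ := Finset.exists_mem_eq_inf' (Finset.univ_nonempty (α := A))
      (fun a : A => g x a + α * ∑ y, P x a y * K y)
    calc Tbell P g α J x ≤ g x a + α * ∑ y, P x a y * J y :=
          Finset.inf'_le _ (Finset.mem_univ a)
      _ ≤ (g x a + α * ∑ y, P x a y * K y) + α * ‖J - K‖ := by
          have := (abs_le.mp (key a)).2; linarith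
      _ = Tbell P g α K x + α * ‖J - K‖ := by rw [Tbell, ha]
  have h2 : Tbell P g α K x ≤ Tbell P g α J x + α * ‖J - K‖ := by
    obtain ⟨a, _, ha⟩ := Finset.exists_mem_eq_inf' (Finset.univ_nonempty (α := A))
      (fun a : A => g x a + α * ∑ y, P x a y * J y)
    calc Tbell P g α K x ≤ g x a + α * ∑ y, P x a y * K y :=
          Finset.inf'_le _ (Finset.mem_univ a)
      _ ≤ (g x a + α * ∑ y, P x a y * J y) + α * ‖J - K‖ := by
          have := (abs_le.mp (key a)).1; linarith
      _ = Tbell P g α J x + α * ‖J - K‖ := by rw [Tbell, ha]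
  have : |Tbell P g α J x - Tbell P g α K x| ≤ α * ‖J - K‖ := abs_le.mpr ⟨by linarith, by linarith⟩
  simpa using this

theorem stmt_6 {S A : Type*} [Fintype S] [Nonempty S] [DecidableEq S] [Fintype A] [Nonempty A]
    (P : S → A → S → ℝ) (g : S → A → ℝ) (α : ℝ)
    (hP0 : ∀ x a y, 0 ≤ P x a y) (hP1 : ∀ x a, ∑ y, P x a y = 1)
    (hα0 : 0 < α) (hα1 : α < 1)
    (Jstar : S → ℝ) (hJstar : Tbell P g α Jstar = Jstar) :
    (∀ (J : S → ℝ) (n : ℕ), ‖(Tbell P g α)^[n] J - Jstar‖ ≤ α ^ n * ‖J - Jstar‖) ∧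
    (∀ J : S → ℝ, Filter.Tendsto (fun n : ℕ => (Tbell P g α)^[n] J)
      Filter.atTop (nhds Jstar)) := by
  have main : ∀ (J : S → ℝ) (n : ℕ), ‖(Tbell P g α)^[n] J - Jstar‖ ≤ α ^ n * ‖J - Jstar‖ := by
    intro J n
    induction n with
    | zero => simp
    | succ n ih =>
      rw [Function.iterate_succ_apply']
      calc ‖Tbell P g α ((Tbell P g α)^[n] J) - Jstar‖
          = ‖Tbell P g α ((Tbell P g α)^[n] J) - Tbell P g α Jstar‖ := by rw [hJstar]
        _ ≤ α * ‖(Tbell P g α)^[n] J - Jstar‖ :=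
            Tbell_contraction P g α hP0 hP1 hα0 _ _
        _ ≤ α * (α ^ n * ‖J - Jstar‖) := mul_le_mul_of_nonneg_left ih hα0.le
        _ = α ^ (n + 1) * ‖J - Jstar‖ := by ring
  refine ⟨main, fun J => ?_⟩
  rw [tendsto_iff_norm_sub_tendsto_zero]
  have hg : Filter.Tendsto (fun n : ℕ => α ^ n * ‖J - Jstar‖) Filter.atTop (nhds 0) := by
    have := tendsto_pow_atTop_nhds_zero_of_lt_one hα0.le hα1
    simpa using this.mul_const ‖J - Jstar‖
  exact squeeze_zero (fun n => norm_nonneg _) (fun n => main J n) hg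
end

section
/- (Existence of an optimal deterministic stationary policy, Theorem 6.2.10 of Puterman, finite case.) There exists a stationary deterministic policy μ* : S → A such that J_{μ*} = J*; consequently, for every x ∈ S, J*(x) = min over all stationary deterministic policies μ of J_μ(x), and the minimum is attained by μ* simultaneously for all states. -/
/-- The transition matrix `P_μ` of a stationary deterministic policy `μ`. -/
def Pmat {S A : Type*} (P : S → A → S → ℝ) (μ : S → A) : Matrix S S ℝ :=
  fun x y => P x (μ x) y

/-- The stage-cost vector `g_μ` of a stationary deterministic policy `μ`. -/
def gvec {S A : Type*} (g : S → A → ℝ) (μ : S → A) : S → ℝ :=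
  fun x => g x (μ x)

/-- The value function `J_μ(x) = ∑_{t} α^t (P_μ^t g_μ)(x)` of policy `μ`. -/
noncomputable def Jval {S A : Type*} [Fintype S] [DecidableEq S]
    (P : S → A → S → ℝ) (g : S → A → ℝ) (α : ℝ) (μ : S → A) : S → ℝ :=
  fun x => ∑' t : ℕ, α ^ t * ((Pmat P μ ^ t).mulVec (gvec g μ)) x

/-!
Every policy value `J_μ` is the unique solution of `J = g_μ + α P_μ J`. Because `P_μ` is
row-stochastic and `α < 1`, this equation obeys a comparison principle: a subsolution lies below
every supersolution (look at the state where their difference is largest). Since `J* = T J*` is a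
supersolution for every policy, `J* ≤ J_μ`; and for a policy greedy with respect to `J*` it is a
solution, so `J_μ = J*`.
-/

open Matrix

section RowStochastic

variable {S : Type*} [Fintype S] [DecidableEq S] {M : Matrix S S ℝ}

lemma mulVec_apply_le_of_mem_rowStochastic (hM : M ∈ rowStochastic ℝ S) {v : S → ℝ} {c : ℝ}
    (hv : ∀ y, v y ≤ c) (x : S) : (M *ᵥ v) x ≤ c :=
  calc (M *ᵥ v) x = ∑ y, M x y * v y := rfl
    _ ≤ ∑ y, M x y * c :=
      Finset.sum_le_sum fun y _ => mul_le_mul_of_nonneg_left (hv y) (hM.1 x y)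
    _ = c := by rw [← Finset.sum_mul, sum_row_of_mem_rowStochastic hM, one_mul]

lemma norm_mulVec_le_of_mem_rowStochastic (hM : M ∈ rowStochastic ℝ S) (v : S → ℝ) :
    ‖M *ᵥ v‖ ≤ ‖v‖ := by
  refine (pi_norm_le_iff_of_nonneg (norm_nonneg v)).2 fun x => abs_le.2 ⟨?_, ?_⟩
  · have := mulVec_apply_le_of_mem_rowStochastic hM (v := -v)
      (fun y => (neg_le_abs (v y)).trans (norm_le_pi_norm v y)) x
    rw [mulVec_neg, Pi.neg_apply] at this
    linarith
  · exact mulVec_apply_le_of_mem_rowStochastic hM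
      (fun y => (le_abs_self (v y)).trans (norm_le_pi_norm v y)) x

lemma summable_discounted_mulVec (hM : M ∈ rowStochastic ℝ S) {α : ℝ} (hα0 : 0 ≤ α)
    (hα1 : α < 1) (v : S → ℝ) (x : S) :
    Summable fun t : ℕ => α ^ t * (M ^ t *ᵥ v) x := by
  refine Summable.of_norm_bounded ((summable_geometric_of_lt_one hα0 hα1).mul_right ‖v‖)
    fun t => ?_
  rw [norm_mul, norm_pow, Real.norm_of_nonneg hα0]
  gcongr
  exact (norm_le_pi_norm _ x).trans
    (norm_mulVec_le_of_mem_rowStochastic (pow_mem hM t) v)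

lemma tsum_discounted_mulVec_eq (hM : M ∈ rowStochastic ℝ S) {α : ℝ} (hα0 : 0 ≤ α)
    (hα1 : α < 1) (v : S → ℝ) (x : S) :
    ∑' t : ℕ, α ^ t * (M ^ t *ᵥ v) x
      = v x + α * (M *ᵥ fun y => ∑' t : ℕ, α ^ t * (M ^ t *ᵥ v) y) x := by
  have hs := summable_discounted_mulVec hM hα0 hα1 v
  rw [(hs x).tsum_eq_zero_add, pow_zero, pow_zero, one_mul, one_mulVec]
  congr 1
  calc ∑' t : ℕ, α ^ (t + 1) * (M ^ (t + 1) *ᵥ v) x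
      = ∑' t : ℕ, ∑ y, α * (M x y * (α ^ t * (M ^ t *ᵥ v) y)) := by
        refine tsum_congr fun t => ?_
        rw [pow_succ' M, ← mulVec_mulVec, mulVec, dotProduct, Finset.mul_sum]
        exact Finset.sum_congr rfl fun y _ => by ring
    _ = ∑ y, ∑' t : ℕ, α * (M x y * (α ^ t * (M ^ t *ᵥ v) y)) :=
        Summable.tsum_finsetSum fun y _ => ((hs y).mul_left _).mul_left _
    _ = α * (M *ᵥ fun y => ∑' t : ℕ, α ^ t * (M ^ t *ᵥ v) y) x := by
        rw [mulVec, dotProduct, Finset.mul_sum]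
        exact Finset.sum_congr rfl fun y _ => by rw [tsum_mul_left, tsum_mul_left]

lemma nonpos_of_le_mul_mulVec (hM : M ∈ rowStochastic ℝ S) {α : ℝ} (hα0 : 0 ≤ α)
    (hα1 : α < 1) {e : S → ℝ} (he : ∀ x, e x ≤ α * (M *ᵥ e) x) : e ≤ 0 := by
  intro x
  show e x ≤ 0
  have : Nonempty S := ⟨x⟩
  obtain ⟨x₀, hx₀⟩ := Finite.exists_max e
  have hmax : e x₀ ≤ α * e x₀ :=
    (he x₀).trans <|
      mul_le_mul_of_nonneg_left (mulVec_apply_le_of_mem_rowStochastic hM hx₀ x₀) hα0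
  exact (hx₀ x).trans (by nlinarith)

lemma le_of_subsolution_of_supersolution (hM : M ∈ rowStochastic ℝ S) {α : ℝ} (hα0 : 0 ≤ α)
    (hα1 : α < 1) {v u w : S → ℝ} (hu : ∀ x, u x ≤ v x + α * (M *ᵥ u) x)
    (hw : ∀ x, v x + α * (M *ᵥ w) x ≤ w x) : u ≤ w := by
  have hdiff : u - w ≤ 0 := nonpos_of_le_mul_mulVec hM hα0 hα1 fun x => by
    simp only [mulVec_sub, Pi.sub_apply, mul_sub]
    linarith [hu x, hw x]
  exact fun x => sub_nonpos.1 (hdiff x)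

end RowStochastic

section MDP

variable {S A : Type*} [Fintype S] {P : S → A → S → ℝ} {g : S → A → ℝ} {α : ℝ}

lemma Pmat_mem_rowStochastic [DecidableEq S] (hP0 : ∀ x a y, 0 ≤ P x a y)
    (hP1 : ∀ x a, ∑ y, P x a y = 1) (μ : S → A) : Pmat P μ ∈ rowStochastic ℝ S :=
  mem_rowStochastic_iff_sum.2 ⟨fun x y => hP0 x (μ x) y, fun x => hP1 x (μ x)⟩

lemma Jval_eq_gvec_add [DecidableEq S] (hP0 : ∀ x a y, 0 ≤ P x a y)
    (hP1 : ∀ x a, ∑ y, P x a y = 1) (hα0 : 0 ≤ α) (hα1 : α < 1) (μ : S → A) (x : S) :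
    Jval P g α μ x = gvec g μ x + α * (Pmat P μ *ᵥ Jval P g α μ) x :=
  tsum_discounted_mulVec_eq (Pmat_mem_rowStochastic hP0 hP1 μ) hα0 hα1 _ x

variable [Fintype A] [Nonempty A]

lemma Tbell_apply_le (J : S → ℝ) (μ : S → A) (x : S) :
    Tbell P g α J x ≤ gvec g μ x + α * (Pmat P μ *ᵥ J) x :=
  Finset.inf'_le _ (Finset.mem_univ (μ x))

lemma exists_greedy_policy (J : S → ℝ) :
    ∃ μ : S → A, ∀ x, Tbell P g α J x = gvec g μ x + α * (Pmat P μ *ᵥ J) x := by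
  choose μ _ hμ using fun x : S => Finset.exists_mem_eq_inf' Finset.univ_nonempty
    (fun a : A => g x a + α * ∑ y, P x a y * J y)
  exact ⟨μ, hμ⟩

variable [DecidableEq S]

lemma le_Jval_of_le_Tbell (hP0 : ∀ x a y, 0 ≤ P x a y) (hP1 : ∀ x a, ∑ y, P x a y = 1)
    (hα0 : 0 ≤ α) (hα1 : α < 1) {J : S → ℝ} (hJ : J ≤ Tbell P g α J) (μ : S → A) :
    J ≤ Jval P g α μ :=
  le_of_subsolution_of_supersolution (Pmat_mem_rowStochastic hP0 hP1 μ) hα0 hα1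
    (fun x => (hJ x).trans (Tbell_apply_le J μ x))
    (fun x => (Jval_eq_gvec_add hP0 hP1 hα0 hα1 μ x).ge)

lemma Jval_le_of_greedy (hP0 : ∀ x a y, 0 ≤ P x a y) (hP1 : ∀ x a, ∑ y, P x a y = 1)
    (hα0 : 0 ≤ α) (hα1 : α < 1) {J : S → ℝ} (hJ : Tbell P g α J ≤ J) {μ : S → A}
    (hμ : ∀ x, Tbell P g α J x = gvec g μ x + α * (Pmat P μ *ᵥ J) x) :
    Jval P g α μ ≤ J :=
  le_of_subsolution_of_supersolution (Pmat_mem_rowStochastic hP0 hP1 μ) hα0 hα1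
    (fun x => (Jval_eq_gvec_add hP0 hP1 hα0 hα1 μ x).le)
    (fun x => (hμ x).symm.le.trans (hJ x))

end MDP

theorem stmt_10_general {S A : Type*} [Fintype S] [DecidableEq S] [Fintype A] [Nonempty A]
    (P : S → A → S → ℝ) (g : S → A → ℝ) (α : ℝ)
    (hP0 : ∀ x a y, 0 ≤ P x a y) (hP1 : ∀ x a, ∑ y, P x a y = 1)
    (hα0 : 0 < α) (hα1 : α < 1)
    (Jstar : S → ℝ) (hJstar : Tbell P g α Jstar = Jstar) :
    ∃ μstar : S → A, Jval P g α μstar = Jstar ∧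
      ∀ x : S, Jstar x =
        Finset.univ.inf' Finset.univ_nonempty (fun μ : S → A => Jval P g α μ x) := by
  have hle : ∀ μ, Jstar ≤ Jval P g α μ :=
    le_Jval_of_le_Tbell hP0 hP1 hα0.le hα1 hJstar.ge
  obtain ⟨μstar, hgreedy⟩ := exists_greedy_policy (P := P) (g := g) (α := α) Jstar
  have hopt : Jval P g α μstar = Jstar :=
    le_antisymm (Jval_le_of_greedy hP0 hP1 hα0.le hα1 hJstar.le hgreedy) (hle μstar)
  refine ⟨μstar, hopt, fun x => le_antisymm (Finset.le_inf' _ _ fun μ _ => hle μ x) ?_⟩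
  exact hopt ▸ Finset.inf'_le (fun μ : S → A => Jval P g α μ x) (Finset.mem_univ μstar)

theorem stmt_10 {S A : Type*} [Fintype S] [Nonempty S] [DecidableEq S] [Fintype A] [Nonempty A]
    (P : S → A → S → ℝ) (g : S → A → ℝ) (α : ℝ)
    (hP0 : ∀ x a y, 0 ≤ P x a y) (hP1 : ∀ x a, ∑ y, P x a y = 1)
    (hα0 : 0 < α) (hα1 : α < 1)
    (Jstar : S → ℝ) (hJstar : Tbell P g α Jstar = Jstar) :
    ∃ μstar : S → A, Jval P g α μstar = Jstar ∧
      ∀ x : S, Jstar x =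
        Finset.univ.inf' Finset.univ_nonempty (fun μ : S → A => Jval P g α μ x) :=
  stmt_10_general P g α hP0 hP1 hα0 hα1 Jstar hJstar
end

section
/- (Optimality criterion, Proposition 1.2.3 of Bertsekas.) A stationary deterministic policy μ is optimal, i.e., J_μ = J*, if and only if T_μ J* = T J*, i.e., μ(x) attains the minimum in Bellman's equation (T J*)(x) = min_{a ∈ A} [g x a + α ∑_{y∈S} P x a y · J*(y)] for every x ∈ S. -/
/-- The one-stage DP operator `T_μ` for a stationary deterministic policy `μ`. -/
noncomputable def Tpol {S A : Type*} [Fintype S]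
    (P : S → A → S → ℝ) (g : S → A → ℝ) (α : ℝ) (μ : S → A) (J : S → ℝ) : S → ℝ :=
  fun x => g x (μ x) + α * ∑ y, P x (μ x) y * J y

namespace Matrix

variable {n : Type*} [Fintype n] [DecidableEq n] {M : Matrix n n ℝ}

theorem norm_mulVec_le_of_mem_rowStochastic (hM : M ∈ rowStochastic ℝ n) (v : n → ℝ) :
    ‖M *ᵥ v‖ ≤ ‖v‖ := by
  refine (pi_norm_le_iff_of_nonneg (norm_nonneg v)).2 fun i => ?_
  calc ‖(M *ᵥ v) i‖ = ‖∑ j, M i j * v j‖ := rfl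
    _ ≤ ∑ j, ‖M i j * v j‖ := norm_sum_le _ _
    _ ≤ ∑ j, M i j * ‖v‖ := Finset.sum_le_sum fun j _ => by
        rw [norm_mul, Real.norm_of_nonneg (nonneg_of_mem_rowStochastic hM)]
        exact mul_le_mul_of_nonneg_left (norm_le_pi_norm v j) (nonneg_of_mem_rowStochastic hM)
    _ = ‖v‖ := by rw [← Finset.sum_mul, sum_row_of_mem_rowStochastic hM, one_mul]

variable {α : ℝ}

theorem summable_pow_smul_pow_mulVec (hM : M ∈ rowStochastic ℝ n) (hα : |α| < 1) (v : n → ℝ) :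
    Summable fun t : ℕ => α ^ t • (M ^ t *ᵥ v) := by
  refine .of_norm_bounded ((summable_geometric_of_lt_one (abs_nonneg α) hα).mul_right ‖v‖)
    fun t => ?_
  rw [norm_smul, Real.norm_eq_abs, abs_pow]
  exact mul_le_mul_of_nonneg_left (norm_mulVec_le_of_mem_rowStochastic (pow_mem hM t) v)
    (by positivity)

theorem tsum_pow_smul_pow_mulVec_eq (hM : M ∈ rowStochastic ℝ n) (hα : |α| < 1) (v : n → ℝ) :
    ∑' t : ℕ, α ^ t • (M ^ t *ᵥ v) = v + α • (M *ᵥ ∑' t : ℕ, α ^ t • (M ^ t *ᵥ v)) := by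
  have hs := summable_pow_smul_pow_mulVec hM hα v
  have hstep : ∀ t : ℕ, α ^ (t + 1) • (M ^ (t + 1) *ᵥ v) = (α • M) *ᵥ (α ^ t • (M ^ t *ᵥ v)) :=
    fun t => by
      rw [pow_succ, pow_succ', ← mulVec_mulVec, mulVec_smul, smul_mulVec, smul_smul, mul_comm]
  have htail : ∑' t : ℕ, α ^ (t + 1) • (M ^ (t + 1) *ᵥ v)
      = (α • M) *ᵥ ∑' t : ℕ, α ^ t • (M ^ t *ᵥ v) := by
    simp_rw [hstep]
    exact (hs.hasSum.map (mulVecLin (α • M))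
      (mulVecLin (α • M)).continuous_of_finiteDimensional).tsum_eq
  conv_lhs => rw [hs.tsum_eq_zero_add, htail]
  rw [pow_zero, pow_zero, one_smul, one_mulVec, smul_mulVec]

theorem eq_of_eq_add_smul_mulVec (hM : M ∈ rowStochastic ℝ n) (hα : |α| < 1) {v J K : n → ℝ}
    (hJ : J = v + α • (M *ᵥ J)) (hK : K = v + α • (M *ᵥ K)) : J = K := by
  have hcontract : ‖J - K‖ ≤ |α| * ‖J - K‖ :=
    calc ‖J - K‖ = ‖α • (M *ᵥ (J - K))‖ := by
          rw [mulVec_sub, smul_sub]; nth_rw 1 [hJ, hK]; rw [add_sub_add_left_eq_sub]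
      _ ≤ |α| * ‖J - K‖ := by
          rw [norm_smul, Real.norm_eq_abs]
          exact mul_le_mul_of_nonneg_left (norm_mulVec_le_of_mem_rowStochastic hM _) (abs_nonneg α)
  have hnorm : ‖J - K‖ = 0 := by nlinarith [norm_nonneg (J - K), abs_nonneg α]
  exact sub_eq_zero.1 (norm_eq_zero.1 hnorm)

end Matrix

open Matrix

section PolicyEvaluation

variable {S A : Type*} [Fintype S] {P : S → A → S → ℝ} {α : ℝ}

theorem tpol_eq_add_smul_mulVec (g : S → A → ℝ) (μ : S → A) (J : S → ℝ) :
    Tpol P g α μ J = gvec g μ + α • (Pmat P μ *ᵥ J) :=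
  rfl

variable [DecidableEq S]

theorem pmat_mem_rowStochastic (hP0 : ∀ x a y, 0 ≤ P x a y) (hP1 : ∀ x a, ∑ y, P x a y = 1)
    (μ : S → A) : Pmat P μ ∈ rowStochastic ℝ S :=
  mem_rowStochastic_iff_sum.2 ⟨fun x y => hP0 x (μ x) y, fun x => hP1 x (μ x)⟩

theorem jval_eq_tsum (hP0 : ∀ x a y, 0 ≤ P x a y) (hP1 : ∀ x a, ∑ y, P x a y = 1) (hα : |α| < 1)
    (g : S → A → ℝ) (μ : S → A) :
    Jval P g α μ = ∑' t : ℕ, α ^ t • (Pmat P μ ^ t *ᵥ gvec g μ) := by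
  funext x
  rw [tsum_apply (summable_pow_smul_pow_mulVec (pmat_mem_rowStochastic hP0 hP1 μ) hα _)]
  rfl

theorem tpol_jval (hP0 : ∀ x a y, 0 ≤ P x a y) (hP1 : ∀ x a, ∑ y, P x a y = 1) (hα : |α| < 1)
    (g : S → A → ℝ) (μ : S → A) : Tpol P g α μ (Jval P g α μ) = Jval P g α μ := by
  rw [tpol_eq_add_smul_mulVec, jval_eq_tsum hP0 hP1 hα]
  exact (tsum_pow_smul_pow_mulVec_eq (pmat_mem_rowStochastic hP0 hP1 μ) hα _).symm

theorem eq_of_tpol_eq_self (hP0 : ∀ x a y, 0 ≤ P x a y) (hP1 : ∀ x a, ∑ y, P x a y = 1)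
    (hα : |α| < 1) {g : S → A → ℝ} {μ : S → A} {J K : S → ℝ}
    (hJ : Tpol P g α μ J = J) (hK : Tpol P g α μ K = K) : J = K :=
  eq_of_eq_add_smul_mulVec (pmat_mem_rowStochastic hP0 hP1 μ) hα hJ.symm hK.symm

end PolicyEvaluation

theorem stmt_11_general {S A : Type*} [Fintype S] [DecidableEq S] [Fintype A] [Nonempty A]
    (P : S → A → S → ℝ) (g : S → A → ℝ) (α : ℝ)
    (hP0 : ∀ x a y, 0 ≤ P x a y) (hP1 : ∀ x a, ∑ y, P x a y = 1)
    (hα0 : 0 < α) (hα1 : α < 1)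
    (Jstar : S → ℝ) (hJstar : Tbell P g α Jstar = Jstar)
    (μ : S → A) :
    Jval P g α μ = Jstar ↔ Tpol P g α μ Jstar = Tbell P g α Jstar := by
  have hα : |α| < 1 := abs_lt.2 ⟨by linarith, hα1⟩
  have hJval := tpol_jval hP0 hP1 hα g μ
  constructor
  · rintro rfl
    rw [hJval, hJstar]
  · intro hopt
    exact eq_of_tpol_eq_self hP0 hP1 hα hJval (hopt.trans hJstar)

theorem stmt_11 {S A : Type*} [Fintype S] [Nonempty S] [DecidableEq S] [Fintype A] [Nonempty A]
    (P : S → A → S → ℝ) (g : S → A → ℝ) (α : ℝ)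
    (hP0 : ∀ x a y, 0 ≤ P x a y) (hP1 : ∀ x a, ∑ y, P x a y = 1)
    (hα0 : 0 < α) (hα1 : α < 1)
    (Jstar : S → ℝ) (hJstar : Tbell P g α Jstar = Jstar)
    (μ : S → A) :
    Jval P g α μ = Jstar ↔ Tpol P g α μ Jstar = Tbell P g α Jstar :=
  stmt_11_general P g α hP0 hP1 hα0 hα1 Jstar hJstar μ
end

section
/- (Optimality among nonstationary Markov policies.) Let π = (μ_0, μ_1, μ_2, …) be any sequence of maps μ_t : S → A, and define its discounted cost by J_π(x) = ∑_{t=0}^∞ α^t ((P_{μ_0} · P_{μ_1} ⋯ P_{μ_{t-1}}) g_{μ_t})(x), where the empty matrix product is the identity. Then this series converges absolutely with |J_π(x)| ≤ M/(1−α) for M = max_{x,a} |g x a|, and J*(x) ≤ J_π(x) for all x ∈ S; hence the stationary policy attaining J* is optimal over all Markov deterministic policies. -/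
section helpers

variable {S : Type*} [Fintype S]

def IsStochM (Q : Matrix S S ℝ) : Prop := (∀ x y, 0 ≤ Q x y) ∧ ∀ x, ∑ y, Q x y = 1

lemma isStochM_one [DecidableEq S] : IsStochM (1 : Matrix S S ℝ) := by
  constructor
  · intro x y
    by_cases h : x = y <;> simp [Matrix.one_apply, h]
  · intro x
    simp [Matrix.one_apply]

lemma isStochM_mul (Q R : Matrix S S ℝ) (hQ : IsStochM Q) (hR : IsStochM R) :
    IsStochM (Q * R) := by
  constructor
  · intro x y
    rw [Matrix.mul_apply]
    exact Finset.sum_nonneg fun z _ => mul_nonneg (hQ.1 x z) (hR.1 z y)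
  · intro x
    simp only [Matrix.mul_apply]
    rw [Finset.sum_comm]
    calc ∑ z, ∑ y, Q x z * R z y = ∑ z, Q x z * ∑ y, R z y := by
          simp [Finset.mul_sum]
      _ = 1 := by simp [hR.2, hQ.2 x]

lemma isStochM_prod [DecidableEq S] (l : List (Matrix S S ℝ)) (h : ∀ Q ∈ l, IsStochM Q) :
    IsStochM l.prod := by
  induction l with
  | nil => simpa using isStochM_one
  | cons Q l ih =>
    rw [List.prod_cons]
    exact isStochM_mul _ _ (h Q (by simp)) (ih fun R hR => h R (by simp [hR]))

lemma mulVec_eq_sum (Q : Matrix S S ℝ) (v : S → ℝ) (x : S) :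
    Q.mulVec v x = ∑ y, Q x y * v y := rfl

lemma mulVec_abs_le (Q : Matrix S S ℝ) (hQ : IsStochM Q) (v : S → ℝ) (M : ℝ)
    (hv : ∀ y, |v y| ≤ M) (x : S) : |Q.mulVec v x| ≤ M := by
  rw [mulVec_eq_sum]
  calc |∑ y, Q x y * v y| ≤ ∑ y, |Q x y * v y| := Finset.abs_sum_le_sum_abs _ _
    _ ≤ ∑ y, Q x y * M := by
        apply Finset.sum_le_sum
        intro y _
        rw [abs_mul, abs_of_nonneg (hQ.1 x y)]
        exact mul_le_mul_of_nonneg_left (hv y) (hQ.1 x y)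
    _ = M := by rw [← Finset.sum_mul, hQ.2 x, one_mul]

lemma mulVec_mono (Q : Matrix S S ℝ) (hQ : IsStochM Q) (u v : S → ℝ)
    (h : ∀ y, u y ≤ v y) (x : S) : Q.mulVec u x ≤ Q.mulVec v x := by
  rw [mulVec_eq_sum, mulVec_eq_sum]
  exact Finset.sum_le_sum fun y _ => mul_le_mul_of_nonneg_left (h y) (hQ.1 x y)

end helpers

set_option maxHeartbeats 1000000 in
theorem stmt_16 {S A : Type*} [Fintype S] [Nonempty S] [DecidableEq S] [Fintype A] [Nonempty A]
    (P : S → A → S → ℝ) (g : S → A → ℝ) (α : ℝ)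
    (hP0 : ∀ x a y, 0 ≤ P x a y) (hP1 : ∀ x a, ∑ y, P x a y = 1)
    (hα0 : 0 < α) (hα1 : α < 1)
    (Jstar : S → ℝ) (hJstar : Tbell P g α Jstar = Jstar)
    (π : ℕ → S → A) :
    (∀ x : S, Summable (fun t : ℕ =>
      |α ^ t * ((((List.range t).map fun i => Pmat P (π i)).prod).mulVec
        (gvec g (π t))) x|)) ∧
    (∀ x : S,
      |∑' t : ℕ, α ^ t * ((((List.range t).map fun i => Pmat P (π i)).prod).mulVec
        (gvec g (π t))) x| ≤
      (Finset.univ.sup' Finset.univ_nonempty fun x : S =>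
        Finset.univ.sup' Finset.univ_nonempty fun a : A => |g x a|) / (1 - α)) ∧
    (∀ x : S, Jstar x ≤
      ∑' t : ℕ, α ^ t * ((((List.range t).map fun i => Pmat P (π i)).prod).mulVec
        (gvec g (π t))) x) := by
  set Mg : ℝ := Finset.univ.sup' Finset.univ_nonempty fun x : S =>
    Finset.univ.sup' Finset.univ_nonempty fun a : A => |g x a| with hMgdef
  have hMg : ∀ x a, |g x a| ≤ Mg := by
    intro x a
    calc |g x a| ≤ Finset.univ.sup' Finset.univ_nonempty fun a : A => |g x a| :=
          Finset.le_sup' (fun a : A => |g x a|) (Finset.mem_univ a)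
      _ ≤ Mg := Finset.le_sup' (fun x : S => Finset.univ.sup' Finset.univ_nonempty fun a : A => |g x a|) (Finset.mem_univ x)
  have hMg0 : 0 ≤ Mg := le_trans (abs_nonneg _) (hMg Classical.ofNonempty Classical.ofNonempty)
  set Q : ℕ → Matrix S S ℝ := fun t => ((List.range t).map fun i => Pmat P (π i)).prod with hQdef
  have hQstoch : ∀ t, IsStochM (Q t) := by
    intro t
    apply isStochM_prod
    intro R hR
    simp only [List.mem_map] at hR
    obtain ⟨i, _, rfl⟩ := hR
    exact ⟨fun x y => hP0 x (π i x) y, fun x => hP1 x (π i x)⟩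
  have hterm : ∀ t x, |α ^ t * (Q t).mulVec (gvec g (π t)) x| ≤ α ^ t * Mg := by
    intro t x
    rw [abs_mul, abs_of_nonneg (pow_nonneg hα0.le t)]
    exact mul_le_mul_of_nonneg_left
      (mulVec_abs_le _ (hQstoch t) _ Mg (fun y => hMg y (π t y)) x) (pow_nonneg hα0.le t)
  have hgeo : Summable (fun t : ℕ => α ^ t * Mg) :=
    (summable_geometric_of_lt_one hα0.le hα1).mul_right Mg
  have hsumabs : ∀ x : S, Summable (fun t : ℕ => |α ^ t * (Q t).mulVec (gvec g (π t)) x|) := by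
    intro x
    exact Summable.of_nonneg_of_le (fun t => abs_nonneg _) (fun t => hterm t x) hgeo
  have hsum : ∀ x : S, Summable (fun t : ℕ => α ^ t * (Q t).mulVec (gvec g (π t)) x) :=
    fun x => (summable_abs_iff).mp (hsumabs x)
  refine ⟨hsumabs, ?_, ?_⟩
  · -- bound on the tsum
    intro x
    calc |∑' t : ℕ, α ^ t * (Q t).mulVec (gvec g (π t)) x|
        ≤ ∑' t : ℕ, |α ^ t * (Q t).mulVec (gvec g (π t)) x| := by
          have h := norm_tsum_le_tsum_norm
            (f := fun t : ℕ => α ^ t * (Q t).mulVec (gvec g (π t)) x)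
            (by simp only [Real.norm_eq_abs]; exact hsumabs x)
          simp only [Real.norm_eq_abs] at h
          exact h
      _ ≤ ∑' t : ℕ, α ^ t * Mg := Summable.tsum_le_tsum (fun t => hterm t x) (hsumabs x) hgeo
      _ = Mg / (1 - α) := by
          rw [tsum_mul_right, tsum_geometric_of_lt_one hα0.le hα1, div_eq_mul_inv, mul_comm]
  · -- Jstar ≤ Jπ
    intro x
    -- one-step inequality
    have hstep : ∀ (ν : S → A) (z : S),
        Jstar z ≤ gvec g ν z + α * (Pmat P ν).mulVec Jstar z := by
      intro ν z
      have := congrFun hJstar z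
      rw [← this]
      exact Finset.inf'_le _ (Finset.mem_univ (ν z))
    -- induction claim
    have hind : ∀ n : ℕ, Jstar x ≤
        (∑ t ∈ Finset.range n, α ^ t * (Q t).mulVec (gvec g (π t)) x)
          + α ^ n * (Q n).mulVec Jstar x := by
      intro n
      induction n with
      | zero => simp [hQdef, Matrix.one_mulVec]
      | succ n ih =>
        refine le_trans ih ?_
        rw [Finset.sum_range_succ]
        have hQsucc : Q (n + 1) = Q n * Pmat P (π n) := by
          simp [hQdef, List.range_succ]
        have key : (Q n).mulVec Jstar x ≤
            (Q n).mulVec (gvec g (π n)) x + α * (Q (n + 1)).mulVec Jstar x := by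
          have h1 : (Q n).mulVec Jstar x ≤
              (Q n).mulVec (fun z => gvec g (π n) z + α * (Pmat P (π n)).mulVec Jstar z) x :=
            mulVec_mono _ (hQstoch n) _ _ (hstep (π n)) x
          have h2 : (Q n).mulVec (fun z => gvec g (π n) z + α * (Pmat P (π n)).mulVec Jstar z) x
              = (Q n).mulVec (gvec g (π n)) x + α * (Q (n + 1)).mulVec Jstar x := by
            rw [hQsucc, ← Matrix.mulVec_mulVec]
            simp only [mulVec_eq_sum, Finset.mul_sum, mul_add]
            rw [← Finset.sum_add_distrib]
            congr 1
            ext y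
            ring
          linarith [h1, h2.le, h2.ge]
        have := mul_le_mul_of_nonneg_left key (pow_nonneg hα0.le n)
        calc (∑ t ∈ Finset.range n, α ^ t * (Q t).mulVec (gvec g (π t)) x)
              + α ^ n * (Q n).mulVec Jstar x
            ≤ (∑ t ∈ Finset.range n, α ^ t * (Q t).mulVec (gvec g (π t)) x)
              + (α ^ n * (Q n).mulVec (gvec g (π n)) x
                + α ^ (n + 1) * (Q (n + 1)).mulVec Jstar x) := by
              rw [pow_succ]
              nlinarith [this]
          _ = _ := by ring
    -- pass to the limit
    have hMJ : ∃ MJ : ℝ, ∀ z, |Jstar z| ≤ MJ := by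
      refine ⟨Finset.univ.sup' Finset.univ_nonempty fun z : S => |Jstar z|, fun z => ?_⟩
      exact Finset.le_sup' (fun z : S => |Jstar z|) (Finset.mem_univ z)
    obtain ⟨MJ, hMJ⟩ := hMJ
    have htail : Filter.Tendsto (fun n : ℕ => α ^ n * (Q n).mulVec Jstar x)
        Filter.atTop (nhds 0) := by
      have hb : ∀ n : ℕ, ‖α ^ n * (Q n).mulVec Jstar x‖ ≤ α ^ n * MJ := by
        intro n
        rw [Real.norm_eq_abs, abs_mul, abs_of_nonneg (pow_nonneg hα0.le n)]
        exact mul_le_mul_of_nonneg_left (mulVec_abs_le _ (hQstoch n) _ MJ hMJ x)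
          (pow_nonneg hα0.le n)
      have hlim : Filter.Tendsto (fun n : ℕ => α ^ n * MJ) Filter.atTop (nhds 0) := by
        simpa using (tendsto_pow_atTop_nhds_zero_of_lt_one hα0.le hα1).mul_const MJ
      exact squeeze_zero_norm hb hlim
    have hpartial : Filter.Tendsto
        (fun n : ℕ => ∑ t ∈ Finset.range n, α ^ t * (Q t).mulVec (gvec g (π t)) x)
        Filter.atTop (nhds (∑' t : ℕ, α ^ t * (Q t).mulVec (gvec g (π t)) x)) :=
      (hsum x).hasSum.tendsto_sum_nat
    have hRHS : Filter.Tendsto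
        (fun n : ℕ => (∑ t ∈ Finset.range n, α ^ t * (Q t).mulVec (gvec g (π t)) x)
          + α ^ n * (Q n).mulVec Jstar x)
        Filter.atTop (nhds (∑' t : ℕ, α ^ t * (Q t).mulVec (gvec g (π t)) x)) := by
      simpa using hpartial.add htail
    exact le_of_tendsto_of_tendsto' tendsto_const_nhds hRHS hind
end
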